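/- arXiv:2301.00642 — 6 statements merged into one kernel-verified Lean document; each statement's English description precedes it below -/
import Mathlib

section
/- For a polynomial p with real coefficients that has only simple real roots (and degree at least 1), Laguerre's inequality holds strictly at every real point: p''(z)·p(z) − p'(z)² < 0 for all real z. -/
/-!
The Laguerre form `L p z = p''(z) p(z) - p'(z)²` satisfies `L (c q) = c² L q` and
`L ((X - r) q) z = (z - r)² L q z - q(z)²`, so by induction it is `≤ 0` on every product of
linear factors. For the strict inequality, split off the factor `X - z` if `z` is a root (any
factor otherwise): as the roots are simple, the cofactor `q` does not vanish at `z`, and the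
term `-q(z)²` is strictly negative.
-/

open Polynomial

namespace Polynomial

variable {R : Type*}

section CommRing

variable [CommRing R]

noncomputable def laguerreForm (p : R[X]) (z : R) : R :=
  (derivative (derivative p)).eval z * p.eval z - (derivative p).eval z ^ 2

theorem laguerreForm_C_mul (c : R) (p : R[X]) (z : R) :
    laguerreForm (C c * p) z = c ^ 2 * laguerreForm p z := by
  simp only [laguerreForm, derivative_C_mul, eval_mul, eval_C]
  ring

theorem laguerreForm_X_sub_C_mul (r : R) (p : R[X]) (z : R) :
    laguerreForm ((X - C r) * p) z = (z - r) ^ 2 * laguerreForm p z - p.eval z ^ 2 := by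
  simp only [laguerreForm, derivative_mul, derivative_add, derivative_sub, derivative_X,
    derivative_C, sub_zero, one_mul, eval_add, eval_mul, eval_sub, eval_X, eval_C]
  ring

theorem eval_prod_X_sub_C_ne_zero [IsDomain R] {s : Multiset R} {z : R} (hz : z ∉ s) :
    (s.map fun r => X - C r).prod.eval z ≠ 0 := by
  simpa [eval_multiset_prod, Multiset.prod_eq_zero_iff, sub_eq_zero] using hz

end CommRing

variable [CommRing R] [LinearOrder R] [IsStrictOrderedRing R]

theorem laguerreForm_prod_X_sub_C_nonpos (s : Multiset R) (z : R) :
    laguerreForm (s.map fun r => X - C r).prod z ≤ 0 := by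
  induction s using Multiset.induction_on with
  | empty => simp [laguerreForm]
  | cons r t ih =>
    rw [Multiset.map_cons, Multiset.prod_cons, laguerreForm_X_sub_C_mul]
    nlinarith [mul_nonpos_of_nonneg_of_nonpos (sq_nonneg (z - r)) ih,
      sq_nonneg ((t.map fun r => X - C r).prod.eval z)]

theorem laguerreForm_prod_X_sub_C_neg {s : Multiset R} (hs : s.Nodup) (hne : s ≠ 0) (z : R) :
    laguerreForm (s.map fun r => X - C r).prod z < 0 := by
  obtain ⟨r, t, rfl, hzt⟩ : ∃ r t, s = r ::ₘ t ∧ z ∉ t := by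
    by_cases hz : z ∈ s
    · obtain ⟨t, rfl⟩ := Multiset.exists_cons_of_mem hz
      exact ⟨z, t, rfl, (Multiset.nodup_cons.mp hs).1⟩
    · obtain ⟨r, hr⟩ := Multiset.exists_mem_of_ne_zero hne
      obtain ⟨t, rfl⟩ := Multiset.exists_cons_of_mem hr
      exact ⟨r, t, rfl, fun hzt => hz (Multiset.mem_cons_of_mem hzt)⟩
  rw [Multiset.map_cons, Multiset.prod_cons, laguerreForm_X_sub_C_mul]
  have hq := eval_prod_X_sub_C_ne_zero hzt
  have hq_sq : 0 < (t.map fun r => X - C r).prod.eval z ^ 2 := by positivity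
  linarith [mul_nonpos_of_nonneg_of_nonpos (sq_nonneg (z - r))
    (laguerreForm_prod_X_sub_C_nonpos t z)]

end Polynomial

/-- Laguerre's inequality (strict version): for a real polynomial of degree at least 1
with only simple real roots, `p''(z) * p(z) - p'(z)^2 < 0` for every real `z`. -/
theorem laguerre_inequality_strict (p : Polynomial ℝ)
    (hdeg : 1 ≤ p.natDegree)
    (hsplit : p.roots.card = p.natDegree)
    (hsimple : p.roots.Nodup) :
    ∀ z : ℝ,
      (derivative (derivative p)).eval z * p.eval z - ((derivative p).eval z) ^ 2 < 0 := by
  intro z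
  have hp : p.leadingCoeff ≠ 0 := leadingCoeff_ne_zero.mpr (by rintro rfl; simp at hdeg)
  have hroots : p.roots ≠ 0 := by rw [← Multiset.card_pos, hsplit]; exact hdeg
  show laguerreForm p z < 0
  rw [← C_leadingCoeff_mul_prod_multiset_X_sub_C hsplit, laguerreForm_C_mul]
  exact mul_neg_of_pos_of_neg (by positivity) (laguerreForm_prod_X_sub_C_neg hsimple hroots z)
end

section
/- For a polynomial p with real coefficients all of whose roots are real (multiplicities allowed), Laguerre's inequality holds weakly: p''(z)·p(z) − p'(z)² ≤ 0 for all real z. -/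
open Polynomial

/-
Write `L f = f'' f - f'^2`. A direct computation gives the product rule
`L (f g) = g² L f + f² L g`, so pointwise nonpositivity of `L` is preserved under products.
Since `L c = 0` for constants and `L (X - a) = -1`, it holds for every product
`c ∏ (X - aᵢ)`, which is what a polynomial with only real roots is.
-/

namespace Polynomial

section CommRing

variable {R : Type*} [CommRing R]

noncomputable def laguerre (f : R[X]) : R[X] :=
  derivative (derivative f) * f - derivative f ^ 2

theorem laguerre_mul (f g : R[X]) :
    laguerre (f * g) = g ^ 2 * laguerre f + f ^ 2 * laguerre g := by
  simp only [laguerre, derivative_mul, derivative_add]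
  ring

@[simp]
theorem laguerre_C (c : R) : laguerre (C c) = 0 := by
  simp [laguerre]

@[simp]
theorem laguerre_X_sub_C (a : R) : laguerre (X - C a) = -1 := by
  simp [laguerre]

end CommRing

section Ordered

variable {R : Type*} [CommRing R] [LinearOrder R] [IsStrictOrderedRing R]

theorem eval_laguerre_mul_nonpos {f g : R[X]} {z : R} (hf : (laguerre f).eval z ≤ 0)
    (hg : (laguerre g).eval z ≤ 0) : (laguerre (f * g)).eval z ≤ 0 := by
  rw [laguerre_mul, eval_add, eval_mul, eval_mul, eval_pow, eval_pow]
  exact add_nonpos (mul_nonpos_of_nonneg_of_nonpos (sq_nonneg _) hf)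
    (mul_nonpos_of_nonneg_of_nonpos (sq_nonneg _) hg)

theorem eval_laguerre_C_mul_prod_X_sub_C_nonpos (c : R) (s : Multiset R) (z : R) :
    (laguerre (C c * (s.map fun a => X - C a).prod)).eval z ≤ 0 := by
  refine eval_laguerre_mul_nonpos (by simp) ?_
  refine Multiset.prod_induction (fun f => (laguerre f).eval z ≤ 0) _
    (fun _ _ => eval_laguerre_mul_nonpos) (by simp [laguerre]) ?_
  simp

theorem eval_laguerre_nonpos_of_card_roots {p : R[X]}
    (hroots : p.roots.card = p.natDegree) (z : R) : (laguerre p).eval z ≤ 0 := by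
  rw [← C_leadingCoeff_mul_prod_multiset_X_sub_C hroots]
  exact eval_laguerre_C_mul_prod_X_sub_C_nonpos _ _ z

end Ordered

end Polynomial

theorem laguerre_inequality_weak_general (p : Polynomial ℝ)
    (hsplit : p.roots.card = p.natDegree) :
    ∀ z : ℝ,
      (derivative (derivative p)).eval z * p.eval z - ((derivative p).eval z) ^ 2 ≤ 0 := by
  intro z
  simpa [laguerre] using eval_laguerre_nonpos_of_card_roots hsplit z

/-- Laguerre's inequality (weak version): for a nonzero real polynomial all of whose
roots are real (with multiplicity), `p''(z) * p(z) - p'(z)^2 ≤ 0` for every real `z`. -/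
theorem laguerre_inequality_weak (p : Polynomial ℝ)
    (hp : p ≠ 0)
    (hsplit : p.roots.card = p.natDegree) :
    ∀ z : ℝ,
      (derivative (derivative p)).eval z * p.eval z - ((derivative p).eval z) ^ 2 ≤ 0 :=
  laguerre_inequality_weak_general p hsplit
end

section
/- For every x₀ ∈ [0,∞), the generalized Laguerre polynomial L_n(x₀, z), regarded as a polynomial in the parameter z, has degree n and all of its n roots are real and simple. -/
open Polynomial Finset

/-- The generalized Laguerre polynomial `L_n(x₀, z)` viewed as a polynomial in the
parameter `z`, for fixed `x₀`. -/
noncomputable def laguerreZ (n : ℕ) (x₀ : ℝ) : Polynomial ℝ :=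
  ∑ k ∈ Finset.range (n + 1),
    Polynomial.C ((-1 : ℝ) ^ k * x₀ ^ k / ((k.factorial : ℝ) * ((n - k).factorial : ℝ))) *
      ∏ j ∈ Finset.Icc (k + 1) n, (Polynomial.X + Polynomial.C (j : ℝ))

/-!
Up to the factor `n!`, `L_n(x₀, ·)` is `P_n`, where `P_0 = 1` and
`P_{m+1}(z) = (z + m + 1) P_m(z) - x₀ P_m(z + 1)`.

For `x₀ > 0` we show by induction that the roots `s_0 < ⋯ < s_{m-1}` of `P_m` are real, exceed
`-m`, and are more than `1` apart. At a root `u` of `(z + m + 1) P_m` (that is, `-(m + 1)` or some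
`s_k`) we have `P_{m+1}(u) = -x₀ P_m(u + 1)`, while `P_{m+1}(s_i - 1) = (s_i + m) P_m(s_i - 1)`.
As `u + 1` and `s_i - 1` lie in the same gap between roots of `P_m`, `P_{m+1}` changes sign on
`(-(m + 1), s_0 - 1)` and on each `(s_{i-1}, s_i - 1)`; it is also negative at the largest root
of `(z + m + 1) P_m` and positive near `+∞`. The `m + 1` roots found this way are again more
than `1` apart. For `x₀ = 0`, `P_n = (z + 1) ⋯ (z + n)`.
-/

theorem exists_mem_Ioo_eq_zero_of_mul_neg {α : Type*} [ConditionallyCompleteLinearOrder α]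
    [TopologicalSpace α] [OrderTopology α] [DenselyOrdered α] {f : α → ℝ} {a b : α} (hab : a ≤ b)
    (hf : ContinuousOn f (Set.Icc a b)) (h : f a * f b < 0) : ∃ t ∈ Set.Ioo a b, f t = 0 := by
  rcases mul_neg_iff.mp h with ⟨ha, hb⟩ | ⟨ha, hb⟩
  · exact intermediate_value_Ioo' hab hf ⟨hb, ha⟩
  · exact intermediate_value_Ioo hab hf ⟨ha, hb⟩

theorem Polynomial.Monic.exists_gt_eval_pos {p : ℝ[X]} (hp : p.Monic) (hdeg : 0 < p.natDegree)
    (u : ℝ) : ∃ v, u < v ∧ 0 < p.eval v := by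
  have htendsto := p.tendsto_atTop_of_leadingCoeff_nonneg (natDegree_pos_iff_degree_pos.mp hdeg)
    (hp.leadingCoeff ▸ zero_le_one)
  obtain ⟨v, hv, huv⟩ :=
    ((htendsto.eventually_gt_atTop 0).and (Filter.eventually_gt_atTop u)).exists
  exact ⟨v, huv, hv⟩

theorem Polynomial.Monic.eq_prod_X_sub_C {R : Type*} [CommRing R] [IsDomain R] {p : R[X]}
    (hp : p.Monic) {n : ℕ} (hdeg : p.natDegree = n) {t : ℕ → R} (ht : Set.InjOn t (Set.Iio n))
    (hroot : ∀ i < n, p.IsRoot (t i)) : p = ∏ i ∈ range n, (X - C (t i)) := by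
  classical
  have ht' : Set.InjOn t (range n) := by rwa [coe_range]
  rw [← prod_image (f := fun a => X - C a) fun i hi j hj h => ht' hi hj h]
  refine eq_of_monic_of_dvd_of_natDegree_le (monic_prod_of_monic _ _ fun a _ => monic_X_sub_C a)
    hp ?_ ?_
  · have hle : ((range n).image t).val ≤ p.roots := by
      refine (Multiset.le_iff_subset (nodup _)).mpr fun a ha => ?_
      obtain ⟨i, hi, rfl⟩ := mem_image.mp (mem_def.mpr ha)
      exact (mem_roots hp.ne_zero).mpr (hroot i (mem_range.mp hi))
    exact (Multiset.prod_X_sub_C_dvd_iff_le_roots hp.ne_zero _).mpr hle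
  · rw [natDegree_prod_of_monic _ _ fun a _ => monic_X_sub_C a, hdeg]
    simp [card_image_of_injOn ht']

theorem natDegree_eq_and_roots_nodup_of_eq_C_mul_prod {R : Type*} [CommRing R] [IsDomain R]
    {p : R[X]} {c : R} (hc : c ≠ 0) {n : ℕ} {t : ℕ → R} (ht : Set.InjOn t (Set.Iio n))
    (hp : p = C c * ∏ i ∈ range n, (X - C (t i))) :
    p.natDegree = n ∧ p.roots.card = n ∧ p.roots.Nodup := by
  classical
  have ht' : Set.InjOn t (range n) := by rwa [coe_range]
  rw [← prod_image (f := fun a => X - C a) fun i hi j hj h => ht' hi hj h] at hp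
  have hroots : p.roots = ((range n).image t).val := by
    rw [hp, roots_C_mul _ hc, roots_prod_X_sub_C]
  refine ⟨?_, ?_, hroots ▸ nodup _⟩
  · rw [hp, natDegree_C_mul hc, natDegree_prod_of_monic _ _ fun a _ => monic_X_sub_C a]
    simp [card_image_of_injOn ht']
  · rw [hroots, card_val, card_image_of_injOn ht', card_range]

theorem mul_eval_prod_X_sub_C_pos {R ι : Type*} [CommRing R] [LinearOrder R]
    [IsStrictOrderedRing R]
    {S : Finset ι} {s : ι → R} {a b : R} (h : ∀ j ∈ S, 0 < (a - s j) * (b - s j)) :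
    0 < (∏ j ∈ S, (X - C (s j))).eval a * (∏ j ∈ S, (X - C (s j))).eval b := by
  simpa [eval_prod, ← prod_mul_distrib] using prod_pos h

theorem strictMonoOn_of_forall_add_one_lt {s : ℕ → ℝ} {n : ℕ}
    (hgap : ∀ i < n, ∀ j < n, i < j → s i + 1 < s j) : StrictMonoOn s (Set.Iio n) :=
  fun i hi j hj hij => (lt_add_one _).trans (hgap i hi j hj hij)

noncomputable def scaledLaguerreZ (n : ℕ) (x₀ : ℝ) : ℝ[X] :=
  ∑ k ∈ range (n + 1), C ((n.choose k : ℝ) * (-x₀) ^ k) * ∏ j ∈ Icc (k + 1) n, (X + C (j : ℝ))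

noncomputable def laguerreStep (x₀ : ℝ) (m : ℕ) (q : ℝ[X]) : ℝ[X] :=
  (X + C ((m : ℝ) + 1)) * q - C x₀ * q.comp (X + C 1)

theorem laguerreZ_eq_C_mul_scaledLaguerreZ (n : ℕ) (x₀ : ℝ) :
    laguerreZ n x₀ = C (n.factorial : ℝ)⁻¹ * scaledLaguerreZ n x₀ := by
  rw [laguerreZ, scaledLaguerreZ, mul_sum]
  refine sum_congr rfl fun k hk => ?_
  rw [← mul_assoc, ← C_mul, Nat.cast_choose ℝ (Nat.lt_succ_iff.mp (mem_range.mp hk)), neg_pow x₀]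
  field_simp

theorem prod_Icc_X_add_C_comp_X_add_one (k n : ℕ) :
    (∏ j ∈ Icc (k + 1) n, (X + C (j : ℝ))).comp (X + C 1) =
      ∏ j ∈ Icc (k + 2) (n + 1), (X + C (j : ℝ)) := by
  rw [Polynomial.prod_comp, show k + 2 = k + 1 + 1 from rfl, ← map_add_right_Icc _ _ 1, prod_map]
  refine prod_congr rfl fun j _ => ?_
  simp only [add_comp, X_comp, C_comp, addRightEmbedding_apply, Nat.cast_add, Nat.cast_one, C_add,
    C_1]
  ring

theorem scaledLaguerreZ_zero (x₀ : ℝ) : scaledLaguerreZ 0 x₀ = 1 := by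
  simp [scaledLaguerreZ]

theorem scaledLaguerreZ_succ (n : ℕ) (x₀ : ℝ) :
    scaledLaguerreZ (n + 1) x₀ = laguerreStep x₀ n (scaledLaguerreZ n x₀) := by
  have hpascal := sum_choose_succ_mul
    (fun i _ => C ((-x₀) ^ i) * ∏ j ∈ Icc (i + 1) (n + 1), (X + C (j : ℝ))) n
  simp only [scaledLaguerreZ, laguerreStep, C_mul, ← C_eq_natCast, mul_assoc] at hpascal ⊢
  rw [hpascal, Polynomial.sum_comp, mul_sum, mul_sum, sub_eq_add_neg, ← sum_neg_distrib]
  refine congrArg₂ (· + ·) (sum_congr rfl fun k hk => ?_) (sum_congr rfl fun k hk => ?_)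
  · rw [prod_Icc_succ_top (by simpa [Nat.lt_succ_iff] using hk)]
    push_cast
    ring
  · rw [mul_comp, C_comp, mul_comp, C_comp, prod_Icc_X_add_C_comp_X_add_one]
    simp only [pow_succ, C_mul, C_neg]
    ring

def HasSpreadRoots (n : ℕ) (p : ℝ[X]) : Prop :=
  ∃ s : ℕ → ℝ, (∀ i < n, ∀ j < n, i < j → s i + 1 < s j) ∧ (∀ i < n, -(n : ℝ) < s i) ∧
    p = ∏ i ∈ range n, (X - C (s i))

section laguerreStep

variable {x₀ : ℝ} {m : ℕ}

theorem eval_laguerreStep (q : ℝ[X]) (x : ℝ) :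
    (laguerreStep x₀ m q).eval x = (x + m + 1) * q.eval x - x₀ * q.eval (x + 1) := by
  simp [laguerreStep, eval_comp, add_assoc]

theorem monic_and_natDegree_laguerreStep {q : ℝ[X]} (hq : q.Monic) :
    (laguerreStep x₀ m q).Monic ∧ (laguerreStep x₀ m q).natDegree = q.natDegree + 1 := by
  have hlead : ((X + C ((m : ℝ) + 1)) * q).natDegree = q.natDegree + 1 := by
    rw [(monic_X_add_C _).natDegree_mul hq, natDegree_X_add_C, add_comm]
  have hlt : (C x₀ * q.comp (X + C 1)).natDegree < ((X + C ((m : ℝ) + 1)) * q).natDegree := by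
    calc (C x₀ * q.comp (X + C 1)).natDegree ≤ (q.comp (X + C 1)).natDegree :=
          natDegree_C_mul_le _ _
      _ = q.natDegree := by rw [natDegree_comp, natDegree_X_add_C, mul_one]
      _ < _ := by omega
  exact ⟨((monic_X_add_C _).mul hq).sub_of_left (degree_lt_degree hlt),
    (natDegree_sub_eq_left_of_natDegree_lt hlt).trans hlead⟩

variable {s : ℕ → ℝ}

/-- `u` is the `i`-th root of `(X + m + 1) * ∏ j < m, (X - s j)`. -/
theorem exists_isRoot_laguerreStep_mem_Ioo (hx : 0 < x₀)
    (hgap : ∀ i < m, ∀ j < m, i < j → s i + 1 < s j) (hlow : ∀ i < m, -(m : ℝ) < s i)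
    {i : ℕ} (hi : i ≤ m) {u : ℝ} (hu : (u + m + 1) * ∏ j ∈ range m, (u - s j) = 0)
    (hu_below : ∀ j < i, s j ≤ u) (hu_above : ∀ j < m, i ≤ j → u + 1 < s j) :
    ∃ t, u < t ∧ (i < m → t < s i - 1) ∧
      (laguerreStep x₀ m (∏ j ∈ range m, (X - C (s j)))).IsRoot t := by
  set q := ∏ j ∈ range m, (X - C (s j))
  set P := laguerreStep x₀ m q
  have hPu : P.eval u = -x₀ * q.eval (u + 1) := by
    simp only [P, q, eval_laguerreStep, eval_prod, eval_sub, eval_X, eval_C] at hu ⊢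
    linear_combination hu
  rcases hi.lt_or_eq.imp_right Eq.symm with hi | rfl
  · have hPv : P.eval (s i - 1) = (s i + m) * q.eval (s i - 1) := by
      have hqsi : q.eval (s i) = 0 := by
        simpa [q, eval_prod] using prod_eq_zero (mem_range.mpr hi) (sub_self (s i))
      rw [eval_laguerreStep, sub_add_cancel, hqsi]
      ring
    have hsame : 0 < q.eval (u + 1) * q.eval (s i - 1) := by
      refine mul_eval_prod_X_sub_C_pos fun j hj => ?_
      have hj := mem_range.mp hj
      rcases lt_or_ge j i with hji | hij
      · exact mul_pos (by linarith [hu_below j hji]) (by linarith [hgap j (hji.trans hi) i hi hji])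
      · have hsij : s i ≤ s j := (strictMonoOn_of_forall_add_one_lt hgap).monotoneOn hi hj hij
        exact mul_pos_of_neg_of_neg (by linarith [hu_above j hj hij]) (by linarith)
    obtain ⟨t, ht, hroot⟩ := exists_mem_Ioo_eq_zero_of_mul_neg (f := P.eval)
      (by linarith [hu_above i hi le_rfl] : u ≤ s i - 1)
      P.continuous.continuousOn (by
        rw [hPu, hPv]
        have := mul_pos (mul_pos hx (by linarith [hlow i hi] : 0 < s i + m)) hsame
        linarith)
    exact ⟨t, ht.1, fun _ => ht.2, hroot⟩
  · have hq : 0 < q.eval (u + 1) := by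
      simpa [q, eval_prod] using prod_pos fun j hj => by linarith [hu_below j (mem_range.mp hj)]
    have hP : P.Monic ∧ P.natDegree = q.natDegree + 1 :=
      monic_and_natDegree_laguerreStep (monic_prod_of_monic _ _ fun j _ => monic_X_sub_C (s j))
    obtain ⟨v, huv, hv⟩ := hP.1.exists_gt_eval_pos (by omega) u
    obtain ⟨t, ht, hroot⟩ := exists_mem_Ioo_eq_zero_of_mul_neg (f := P.eval) huv.le
      P.continuous.continuousOn (by
        rw [hPu]
        have := mul_pos (mul_pos hx hq) hv
        linarith)
    exact ⟨t, ht.1, fun h => absurd h (lt_irrefl m), hroot⟩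

theorem hasSpreadRoots_laguerreStep (hx : 0 < x₀) {q : ℝ[X]} (hq : HasSpreadRoots m q) :
    HasSpreadRoots (m + 1) (laguerreStep x₀ m q) := by
  obtain ⟨s, hgap, hlow, rfl⟩ := hq
  have hmono := (strictMonoOn_of_forall_add_one_lt hgap).monotoneOn
  have hroot : ∀ i ≤ m, ∃ t, -((m : ℝ) + 1) < t ∧ (∀ k, i = k + 1 → s k < t) ∧
      (i < m → t < s i - 1) ∧ (laguerreStep x₀ m (∏ j ∈ range m, (X - C (s j)))).IsRoot t := by
    rintro (_ | k) hi
    · obtain ⟨t, hut, hts, hroot⟩ := exists_isRoot_laguerreStep_mem_Ioo hx hgap hlow hi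
        (u := -(m + 1)) (by ring) (by simp) fun j hj _ => by linarith [hlow j hj]
      exact ⟨t, hut, by simp, hts, hroot⟩
    · obtain ⟨t, hut, hts, hroot⟩ := exists_isRoot_laguerreStep_mem_Ioo hx hgap hlow hi
        (u := s k) (by rw [prod_eq_zero (mem_range.mpr hi) (sub_self _), mul_zero])
        (fun j hj => hmono (by omega : j < m) (by omega : k < m) (by omega))
        fun j hj hkj => hgap k (by omega) j hj (by omega)
      exact ⟨t, by linarith [hlow k (by omega)], fun k' hk' => by rwa [← Nat.succ_inj.mp hk'], hts,
        hroot⟩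
  choose! t ht using hroot
  have hgap' : ∀ i < m + 1, ∀ j < m + 1, i < j → t i + 1 < t j := by
    intro i hi j hj hij
    obtain ⟨k, rfl⟩ : ∃ k, j = k + 1 := ⟨j - 1, by omega⟩
    have := hmono (by omega : i < m) (by omega : k < m) (by omega : i ≤ k)
    linarith [(ht i (by omega)).2.2.1 (by omega), (ht (k + 1) (by omega)).2.1 k rfl]
  obtain ⟨hmonic, hdeg⟩ := monic_and_natDegree_laguerreStep (x₀ := x₀) (m := m)
    (monic_prod_of_monic (range m) _ fun j _ => monic_X_sub_C (s j))
  refine ⟨t, hgap', fun i hi => by exact_mod_cast (ht i (by omega)).1, ?_⟩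
  refine hmonic.eq_prod_X_sub_C ?_ (strictMonoOn_of_forall_add_one_lt hgap').injOn
    fun i hi => (ht i (by omega)).2.2.2
  rw [hdeg, natDegree_prod_of_monic _ _ fun j _ => monic_X_sub_C (s j)]
  simp

end laguerreStep

theorem hasSpreadRoots_scaledLaguerreZ {x₀ : ℝ} (hx : 0 < x₀) (n : ℕ) :
    HasSpreadRoots n (scaledLaguerreZ n x₀) := by
  induction n with
  | zero => exact ⟨0, by simp, by simp, by simp [scaledLaguerreZ_zero]⟩
  | succ n ih => exact scaledLaguerreZ_succ n x₀ ▸ hasSpreadRoots_laguerreStep hx ih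

theorem scaledLaguerreZ_zero_right (n : ℕ) :
    scaledLaguerreZ n 0 = ∏ i ∈ range n, (X - C (-(i + 1 : ℝ))) := by
  induction n with
  | zero => simp [scaledLaguerreZ_zero]
  | succ n ih =>
    rw [scaledLaguerreZ_succ, ih, laguerreStep, prod_range_succ, C_0, zero_mul, sub_zero]
    simp only [C_neg, sub_neg_eq_add]
    ring

/-- For every `x₀ ≥ 0`, `L_n(x₀, ·)` has degree `n` and all of its `n` roots are real
and simple. -/
theorem laguerreZ_real_rooted (n : ℕ) (x₀ : ℝ) (hx : 0 ≤ x₀) :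
    (laguerreZ n x₀).natDegree = n ∧
    (laguerreZ n x₀).roots.card = n ∧
    (laguerreZ n x₀).roots.Nodup := by
  have hc : (n.factorial : ℝ)⁻¹ ≠ 0 := by positivity
  rcases hx.eq_or_lt with rfl | hx
  · refine natDegree_eq_and_roots_nodup_of_eq_C_mul_prod hc (fun i _ j _ h => ?_)
      (by rw [laguerreZ_eq_C_mul_scaledLaguerreZ, scaledLaguerreZ_zero_right])
    exact_mod_cast add_right_cancel (neg_injective h)
  · obtain ⟨s, hgap, -, hs⟩ := hasSpreadRoots_scaledLaguerreZ hx n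
    exact natDegree_eq_and_roots_nodup_of_eq_C_mul_prod hc
      (strictMonoOn_of_forall_add_one_lt hgap).injOn
      (by rw [laguerreZ_eq_C_mul_scaledLaguerreZ, hs])
end

section
/- For every x₀ ∈ [−1,1] with x₀ ≠ 0, the Gegenbauer polynomial G_n(x₀, z), regarded as a polynomial in the parameter z, has degree n and all of its roots are real. -/
open Polynomial Finset

/-- The Gegenbauer polynomial `G_n(x₀, z)` viewed as a polynomial in the parameter `z`,
for fixed `x₀`. -/
noncomputable def gegenbauerZ (n : ℕ) (x₀ : ℝ) : Polynomial ℝ :=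
  ∑ k ∈ Finset.range (n / 2 + 1),
    Polynomial.C ((-1 : ℝ) ^ k * (2 * x₀) ^ (n - 2 * k) /
      ((k.factorial : ℝ) * ((n - 2 * k).factorial : ℝ))) *
      ∏ i ∈ Finset.range (n - k), (Polynomial.X + Polynomial.C (i : ℝ))


/-!
For `x ≠ 0` every term of `G_n(x, z)` contains the Pochhammer factor `(z)_⌈n/2⌉`, so
`G_n(x, ·) = (2x)ⁿ/n! · (z)_⌈n/2⌉ · R_n` with `R_n` monic of degree `⌊n/2⌋`. The classical
three-term recurrence `(n+2) G_{n+2} = 2x (z+n+1) G_{n+1} - (2z+n) G_n` turns into recurrences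
for `R_{2m+2}` and `R_{2m+3}`. For `x² < 1` they show, by induction on `m`, that `R_{2m}` and
`R_{2m+1}` have simple real roots which interlace and lie to the right of `1/2 - m`: the next
polynomial alternates in sign along the roots of the previous one (together with the point
`1/2 - (m+1)`, where `R_{2m+2}` is a positive multiple of `(1 - x⁻²)^(m+1)`), so the intermediate
value theorem produces all of its roots. For `x² = 1` the recurrences give `R_n = (z + 1/2)_⌊n/2⌋`.
-/

open scoped Nat

section Pochhammer

variable {S : Type*} [CommRing S]

theorem prod_range_X_add_C_eq_ascPochhammer (j : ℕ) :
    ∏ i ∈ range j, (X + C (i : S)) = ascPochhammer S j := by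
  induction j with
  | zero => simp
  | succ j ih => rw [prod_range_succ, ih, ascPochhammer_succ_right, map_natCast]

theorem X_add_C_mul_ascPochhammer (c : S) (j : ℕ) :
    (X + C c) * ascPochhammer S j = ascPochhammer S (j + 1) + C (c - j) * ascPochhammer S j := by
  rw [ascPochhammer_succ_right, map_sub, map_natCast]
  ring

theorem X_add_C_mul_ascPochhammer_sub {m j : ℕ} (h : j ≤ m) :
    (X + C (m : S)) * ascPochhammer S (m - j) =
      ascPochhammer S (m + 1 - j) + C (j : S) * ascPochhammer S (m - j) := by
  rw [X_add_C_mul_ascPochhammer, Nat.cast_sub h, sub_sub_cancel, Nat.sub_add_comm h]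

theorem two_mul_X_add_C_mul_ascPochhammer_sub {m j : ℕ} (h : j ≤ m) :
    (2 * X + C (m : S)) * ascPochhammer S (m - j) =
      2 * ascPochhammer S (m + 1 - j) + C (2 * j - m : S) * ascPochhammer S (m - j) := by
  rw [map_sub, map_mul, map_ofNat]
  linear_combination 2 * X_add_C_mul_ascPochhammer_sub (S := S) h

theorem splits_ascPochhammer (j : ℕ) : (ascPochhammer S j).Splits := by
  induction j with
  | zero => simp [Splits.one]
  | succ j ih =>
    rw [ascPochhammer_succ_right, ← map_natCast C]
    exact ih.mul (Splits.X_add_C _)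

end Pochhammer

theorem ascPochhammer_eval_half (j : ℕ) :
    (ascPochhammer ℝ j).eval (1 / 2) = (2 * j)! / (4 ^ j * j !) := by
  induction j with
  | zero => simp
  | succ j ih =>
    rw [ascPochhammer_succ_eval, ih, show 2 * (j + 1) = 2 * j + 1 + 1 by ring,
      Nat.factorial_succ, Nat.factorial_succ, Nat.factorial_succ j]
    push_cast
    field_simp
    ring

theorem ascPochhammer_comp_X_add_half_succ (m : ℕ) :
    (ascPochhammer ℝ (m + 1)).comp (X + C (1 / 2)) =
      (ascPochhammer ℝ m).comp (X + C (1 / 2)) * (X + C ((2 * m + 1) / 2 : ℝ)) := by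
  rw [ascPochhammer_succ_right, mul_comp, add_comp, X_comp, natCast_comp, add_assoc,
    ← map_natCast (C : ℝ →+* ℝ[X]), ← map_add]
  congr 3
  ring

theorem C_mul_two_mul_X_add_C {K : Type*} [Field K] [NeZero (2 : K)] (a b : K) :
    C a * (2 * X + C b) = C (2 * a) * (X + C (b / 2)) := by
  rw [C_mul, show C b = C 2 * C (b / 2) by rw [← C_mul]; congr 1; field_simp, map_ofNat]
  ring

theorem monic_and_natDegree_sum_C_mul {R : Type*} [Semiring R] [Nontrivial R] {Q : ℕ → R[X]}
    (hQ : ∀ j, (Q j).Monic ∧ (Q j).natDegree = j) {c : ℕ → R} (hc : c 0 = 1) (m : ℕ) :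
    (∑ k ∈ range (m + 1), C (c k) * Q (m - k)).Monic ∧
      (∑ k ∈ range (m + 1), C (c k) * Q (m - k)).natDegree = m := by
  have hdeg (j : ℕ) : (Q j).degree = j := by rw [degree_eq_natDegree (hQ j).1.ne_zero, (hQ j).2]
  have hlow : (∑ k ∈ range m, C (c (k + 1)) * Q (m - (k + 1))).degree < (Q m).degree := by
    rw [hdeg, ← mem_degreeLT]
    refine Submodule.sum_mem _ fun k hk => ?_
    rw [← smul_eq_C_mul]
    refine Submodule.smul_mem _ _ (mem_degreeLT.2 ?_)
    rw [hdeg]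
    exact_mod_cast (by grind : m - (k + 1) < m)
  rw [sum_range_succ', hc, map_one, one_mul, Nat.sub_zero, add_comm]
  exact ⟨(hQ m).1.add_of_left hlow, (natDegree_add_eq_left_of_degree_lt hlow).trans (hQ m).2⟩

section Coeff

/-- The coefficient of `ascPochhammer ℝ (n - k)` in `gegenbauerZ n x`, extended by zero to
`2 * k > n` so that its recurrences hold for all `n` and `k`. -/
noncomputable def gegenbauerCoeff (x : ℝ) (n k : ℕ) : ℝ :=
  if 2 * k ≤ n then (-1) ^ k * (2 * x) ^ (n - 2 * k) / (k ! * (n - 2 * k)!) else 0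

variable (x : ℝ)

theorem gegenbauerCoeff_of_eq_two_mul_add {n k r : ℕ} (h : n = 2 * k + r) :
    gegenbauerCoeff x n k = (-1) ^ k * (2 * x) ^ r / (k ! * r !) := by
  rw [gegenbauerCoeff, if_pos (by omega), show n - 2 * k = r by omega]

theorem gegenbauerCoeff_of_lt {n k : ℕ} (h : n < 2 * k) : gegenbauerCoeff x n k = 0 :=
  if_neg (by omega)

theorem mul_gegenbauerCoeff_add_two_zero (n : ℕ) :
    (n + 2 : ℝ) * gegenbauerCoeff x (n + 2) 0 = 2 * x * gegenbauerCoeff x (n + 1) 0 := by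
  rw [gegenbauerCoeff_of_eq_two_mul_add x (r := n + 2) (by omega),
    gegenbauerCoeff_of_eq_two_mul_add x (r := n + 1) (by omega), Nat.factorial_succ (n + 1)]
  push_cast
  field_simp
  ring

theorem mul_gegenbauerCoeff_add_two_succ (n k : ℕ) :
    (n + 2 : ℝ) * gegenbauerCoeff x (n + 2) (k + 1) =
      2 * x * gegenbauerCoeff x (n + 1) (k + 1) - 2 * gegenbauerCoeff x n k := by
  obtain ⟨r, rfl⟩ | h := (em (2 * k + 1 ≤ n)).imp Nat.exists_eq_add_of_le not_le.mp
  · rw [gegenbauerCoeff_of_eq_two_mul_add x (r := r + 1) (by omega),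
      gegenbauerCoeff_of_eq_two_mul_add x (r := r) (by omega),
      gegenbauerCoeff_of_eq_two_mul_add x (r := r + 1) (by omega), Nat.factorial_succ k,
      Nat.factorial_succ r]
    push_cast
    field_simp
    ring
  · rw [gegenbauerCoeff_of_lt x (show n + 1 < 2 * (k + 1) by omega)]
    rcases (Nat.lt_succ_iff.mp h).lt_or_eq with h | rfl
    · simp [gegenbauerCoeff_of_lt x (show n + 2 < 2 * (k + 1) by omega), gegenbauerCoeff_of_lt x h]
    · rw [gegenbauerCoeff_of_eq_two_mul_add x (r := 0) (by omega),
        gegenbauerCoeff_of_eq_two_mul_add x (r := 0) (by omega), Nat.factorial_succ k]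
      push_cast
      field_simp
      ring

theorem mul_gegenbauerCoeff_add_one_succ (n k : ℕ) :
    2 * x * (k + 1) * gegenbauerCoeff x (n + 1) (k + 1) =
      (2 * k - n) * gegenbauerCoeff x n k := by
  obtain ⟨r, rfl⟩ | h := (em (2 * k + 1 ≤ n)).imp Nat.exists_eq_add_of_le not_le.mp
  · rw [gegenbauerCoeff_of_eq_two_mul_add x (r := r) (by omega),
      gegenbauerCoeff_of_eq_two_mul_add x (r := r + 1) (by omega), Nat.factorial_succ k,
      Nat.factorial_succ r]
    push_cast
    field_simp
    ring
  · rw [gegenbauerCoeff_of_lt x (show n + 1 < 2 * (k + 1) by omega)]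
    rcases (Nat.lt_succ_iff.mp h).lt_or_eq with h | rfl
    · simp [gegenbauerCoeff_of_lt x h]
    · push_cast
      ring

end Coeff

section Recurrence

variable (x : ℝ)

theorem gegenbauerZ_eq_sum_range {n N : ℕ} (hN : n / 2 < N) :
    gegenbauerZ n x = ∑ k ∈ range N, C (gegenbauerCoeff x n k) * ascPochhammer ℝ (n - k) := by
  rw [gegenbauerZ, ← sum_subset (range_subset_range.2 hN)]
  · refine sum_congr rfl fun k hk => ?_
    rw [gegenbauerCoeff, if_pos (by grind), prod_range_X_add_C_eq_ascPochhammer]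
  · intro k _ hk
    rw [gegenbauerCoeff_of_lt x (by grind), map_zero, zero_mul]

theorem C_mul_gegenbauerZ_add_two_eq_sum (n : ℕ) :
    C ((n : ℝ) + 2) * gegenbauerZ (n + 2) x =
      ∑ k ∈ range (n + 2),
          (C (2 * x * gegenbauerCoeff x (n + 1) (k + 1)) * ascPochhammer ℝ (n + 1 - k) -
            C (2 * gegenbauerCoeff x n k) * ascPochhammer ℝ (n + 1 - k)) +
        C (2 * x * gegenbauerCoeff x (n + 1) 0) * ascPochhammer ℝ (n + 2) := by
  rw [gegenbauerZ_eq_sum_range x (N := n + 3) (by omega), mul_sum, sum_range_succ']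
  simp only [← mul_assoc, ← C_mul, mul_gegenbauerCoeff_add_two_succ,
    mul_gegenbauerCoeff_add_two_zero, map_sub, sub_mul, Nat.reduceSubDiff, Nat.sub_zero]

theorem C_mul_X_add_C_mul_gegenbauerZ_add_one_eq_sum (n : ℕ) :
    C (2 * x) * (X + C ((n : ℝ) + 1)) * gegenbauerZ (n + 1) x =
      ∑ k ∈ range (n + 2),
          C (2 * x * gegenbauerCoeff x (n + 1) (k + 1)) * ascPochhammer ℝ (n + 1 - k) +
        C (2 * x * gegenbauerCoeff x (n + 1) 0) * ascPochhammer ℝ (n + 2) +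
        ∑ k ∈ range (n + 2), C ((2 * k - n) * gegenbauerCoeff x n k) * ascPochhammer ℝ (n - k) := by
  have term (k : ℕ) : C (2 * x) * (X + C ((n : ℝ) + 1)) *
        (C (gegenbauerCoeff x (n + 1) k) * ascPochhammer ℝ (n + 1 - k)) =
      C (2 * x * gegenbauerCoeff x (n + 1) k) * ascPochhammer ℝ (n + 2 - k) +
        C (2 * x * k * gegenbauerCoeff x (n + 1) k) * ascPochhammer ℝ (n + 1 - k) := by
    by_cases hk : 2 * k ≤ n + 1
    · have h := X_add_C_mul_ascPochhammer_sub (S := ℝ) (m := n + 1) (j := k) (by omega)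
      rw [show n + 1 + 1 - k = n + 2 - k from rfl, Nat.cast_succ] at h
      simp only [C_mul]
      linear_combination C 2 * C x * C (gegenbauerCoeff x (n + 1) k) * h
    · simp [gegenbauerCoeff_of_lt x (not_le.mp hk)]
  rw [gegenbauerZ_eq_sum_range x (N := n + 3) (by omega), mul_sum, sum_congr rfl fun k _ => term k,
    sum_add_distrib, sum_range_succ' _ (n + 2), sum_range_succ' _ (n + 2)]
  simp only [Nat.cast_add, Nat.cast_one, Nat.cast_zero, mul_zero, zero_mul, map_zero, add_zero,
    mul_gegenbauerCoeff_add_one_succ, Nat.reduceSubDiff, Nat.sub_zero]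

theorem two_mul_X_add_C_mul_gegenbauerZ_eq_sum (n : ℕ) :
    (2 * X + C (n : ℝ)) * gegenbauerZ n x =
      ∑ k ∈ range (n + 2), C (2 * gegenbauerCoeff x n k) * ascPochhammer ℝ (n + 1 - k) +
        ∑ k ∈ range (n + 2), C ((2 * k - n) * gegenbauerCoeff x n k) * ascPochhammer ℝ (n - k) := by
  have term (k : ℕ) :
      (2 * X + C (n : ℝ)) * (C (gegenbauerCoeff x n k) * ascPochhammer ℝ (n - k)) =
        C (2 * gegenbauerCoeff x n k) * ascPochhammer ℝ (n + 1 - k) +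
          C ((2 * k - n) * gegenbauerCoeff x n k) * ascPochhammer ℝ (n - k) := by
    by_cases hk : 2 * k ≤ n
    · simp only [C_mul, map_ofNat]
      linear_combination C (gegenbauerCoeff x n k) *
        two_mul_X_add_C_mul_ascPochhammer_sub (S := ℝ) (show k ≤ n by omega)
    · simp [gegenbauerCoeff_of_lt x (not_le.mp hk)]
  rw [gegenbauerZ_eq_sum_range x (N := n + 3) (by omega), mul_sum, sum_congr rfl fun k _ => term k,
    sum_add_distrib, sum_range_succ _ (n + 2), sum_range_succ _ (n + 2),
    gegenbauerCoeff_of_lt x (by omega)]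
  simp

theorem C_mul_gegenbauerZ_add_two (n : ℕ) :
    C ((n : ℝ) + 2) * gegenbauerZ (n + 2) x =
      C (2 * x) * (X + C ((n : ℝ) + 1)) * gegenbauerZ (n + 1) x -
        (2 * X + C (n : ℝ)) * gegenbauerZ n x := by
  rw [C_mul_gegenbauerZ_add_two_eq_sum, C_mul_X_add_C_mul_gegenbauerZ_add_one_eq_sum,
    two_mul_X_add_C_mul_gegenbauerZ_eq_sum, sum_sub_distrib]
  ring

end Recurrence

section Reduced

/-- `gegenbauerZ n x` with the scalar `(2x)ⁿ/n!` and the factor `(z)_⌈n/2⌉` common to all of its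
terms removed. -/
noncomputable def reducedGegenbauer (x : ℝ) (n : ℕ) : ℝ[X] :=
  ∑ k ∈ range (n / 2 + 1), C ((-1) ^ k * n ! / (k ! * (n - 2 * k)! * (2 * x) ^ (2 * k))) *
    (ascPochhammer ℝ (n / 2 - k)).comp (X + C (((n + 1) / 2 : ℕ) : ℝ))

variable {x : ℝ}

theorem gegenbauerZ_eq_C_mul_ascPochhammer_mul (hx : x ≠ 0) (n : ℕ) :
    gegenbauerZ n x =
      C ((2 * x) ^ n / n !) * (ascPochhammer ℝ ((n + 1) / 2) * reducedGegenbauer x n) := by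
  rw [gegenbauerZ, reducedGegenbauer, mul_sum, mul_sum]
  refine sum_congr rfl fun k hk => ?_
  have hk : 2 * k ≤ n := by grind
  have hP : ascPochhammer ℝ ((n + 1) / 2) *
      (ascPochhammer ℝ (n / 2 - k)).comp (X + C (((n + 1) / 2 : ℕ) : ℝ)) =
        ascPochhammer ℝ (n - k) := by
    rw [map_natCast, ascPochhammer_mul]
    congr 1
    omega
  have hc : (-1) ^ k * (2 * x) ^ (n - 2 * k) / (k ! * (n - 2 * k)! : ℝ) =
      (2 * x) ^ n / n ! * ((-1) ^ k * n ! / (k ! * (n - 2 * k)! * (2 * x) ^ (2 * k))) := by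
    rw [← pow_sub_mul_pow (2 * x) hk]
    field_simp
  rw [prod_range_X_add_C_eq_ascPochhammer, ← hP, hc, C_mul]
  ring

theorem reducedGegenbauer_monic_and_natDegree (x : ℝ) (n : ℕ) :
    (reducedGegenbauer x n).Monic ∧ (reducedGegenbauer x n).natDegree = n / 2 := by
  refine monic_and_natDegree_sum_C_mul
    (fun j => ⟨(monic_ascPochhammer ℝ j).comp_X_add_C _, ?_⟩) ?_ _
  · rw [← taylor_apply, natDegree_taylor, ascPochhammer_natDegree]
  · simp [(Nat.factorial_pos n).ne']

theorem reducedGegenbauer_monic (x : ℝ) (n : ℕ) : (reducedGegenbauer x n).Monic :=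
  (reducedGegenbauer_monic_and_natDegree x n).1

theorem natDegree_reducedGegenbauer (x : ℝ) (n : ℕ) : (reducedGegenbauer x n).natDegree = n / 2 :=
  (reducedGegenbauer_monic_and_natDegree x n).2

theorem ascPochhammer_mul_reducedGegenbauer_add_two (hx : x ≠ 0) (n : ℕ) :
    ascPochhammer ℝ ((n + 3) / 2) * reducedGegenbauer x (n + 2) =
      (X + C ((n : ℝ) + 1)) * (ascPochhammer ℝ ((n + 2) / 2) * reducedGegenbauer x (n + 1)) -
        C ((n + 1) / (2 * x ^ 2)) *
          ((X + C ((n : ℝ) / 2)) * (ascPochhammer ℝ ((n + 1) / 2) * reducedGegenbauer x n)) := by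
  have h := C_mul_gegenbauerZ_add_two x n
  simp only [gegenbauerZ_eq_C_mul_ascPochhammer_mul hx] at h
  have hS : (2 * x) ^ (n + 2) / (n + 1)! ≠ 0 := by positivity
  have e2 : C ((n : ℝ) + 2) * C ((2 * x) ^ (n + 2) / (n + 2)!) =
      C ((2 * x) ^ (n + 2) / (n + 1)!) := by
    rw [← C_mul, Nat.factorial_succ (n + 1)]
    congr 1
    push_cast
    field_simp
    ring
  have e1 : C (2 * x) * C ((2 * x) ^ (n + 1) / (n + 1)!) = C ((2 * x) ^ (n + 2) / (n + 1)!) := by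
    rw [← C_mul]
    ring_nf
  have e0 : (2 * X + C (n : ℝ)) * C ((2 * x) ^ n / n !) =
      C ((2 * x) ^ (n + 2) / (n + 1)!) * (C ((n + 1) / (2 * x ^ 2)) * (X + C ((n : ℝ) / 2))) := by
    rw [mul_comm, C_mul_two_mul_X_add_C, ← mul_assoc, ← C_mul, Nat.factorial_succ n]
    congr 2
    push_cast
    field_simp
    ring
  apply mul_left_cancel₀ (C_ne_zero.2 hS)
  linear_combination h - ascPochhammer ℝ ((n + 3) / 2) * reducedGegenbauer x (n + 2) * e2 +
    (X + C ((n : ℝ) + 1)) * (ascPochhammer ℝ ((n + 2) / 2) * reducedGegenbauer x (n + 1)) * e1 -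
    ascPochhammer ℝ ((n + 1) / 2) * reducedGegenbauer x n * e0

theorem reducedGegenbauer_two_mul_add_two (hx : x ≠ 0) (m : ℕ) :
    reducedGegenbauer x (2 * m + 2) =
      (X + C (2 * (m : ℝ) + 1)) * reducedGegenbauer x (2 * m + 1) -
        C ((2 * m + 1) / (2 * x ^ 2)) * reducedGegenbauer x (2 * m) := by
  have h := ascPochhammer_mul_reducedGegenbauer_add_two hx (2 * m)
  rw [show (2 * m + 3) / 2 = m + 1 by omega, show (2 * m + 2) / 2 = m + 1 by omega,
    show (2 * m + 1) / 2 = m by omega, ascPochhammer_succ_right,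
    ← map_natCast (C : ℝ →+* ℝ[X])] at h
  push_cast at h
  rw [mul_div_cancel_left₀ _ two_ne_zero] at h
  apply mul_left_cancel₀ (monic_ascPochhammer ℝ (m + 1)).ne_zero
  rw [ascPochhammer_succ_right, ← map_natCast (C : ℝ →+* ℝ[X])]
  linear_combination h

theorem X_add_C_mul_reducedGegenbauer_two_mul_add_three (hx : x ≠ 0) (m : ℕ) :
    (X + C ((m : ℝ) + 1)) * reducedGegenbauer x (2 * m + 3) =
      (X + C (2 * (m : ℝ) + 2)) * reducedGegenbauer x (2 * m + 2) -
        C ((m + 1) / x ^ 2) *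
          ((X + C ((2 * m + 1) / 2 : ℝ)) * reducedGegenbauer x (2 * m + 1)) := by
  have h := ascPochhammer_mul_reducedGegenbauer_add_two hx (2 * m + 1)
  rw [show (2 * m + 1 + 3) / 2 = m + 1 + 1 by omega, show (2 * m + 1 + 2) / 2 = m + 1 by omega,
    show (2 * m + 1 + 1) / 2 = m + 1 by omega, ascPochhammer_succ_right _ (m + 1),
    ← map_natCast (C : ℝ →+* ℝ[X])] at h
  push_cast at h
  rw [show (2 * m + 1 + 1 : ℝ) = 2 * m + 2 by ring,
    show (2 * m + 2 : ℝ) / (2 * x ^ 2) = (m + 1) / x ^ 2 by ring] at h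
  apply mul_left_cancel₀ (monic_ascPochhammer ℝ (m + 1)).ne_zero
  linear_combination h

theorem reducedGegenbauer_two_mul_eval (x : ℝ) (m : ℕ) :
    (reducedGegenbauer x (2 * m)).eval (1 / 2 - m : ℝ) =
      (2 * m)! / (4 ^ m * m !) * (1 - (x ^ 2)⁻¹) ^ m := by
  rw [reducedGegenbauer, eval_finsetSum, show 2 * m / 2 = m by omega,
    show (2 * m + 1) / 2 = m by omega, show 1 - (x ^ 2)⁻¹ = -(x ^ 2)⁻¹ + 1 by ring, add_pow,
    mul_sum]
  refine sum_congr rfl fun k hk => ?_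
  obtain ⟨j, rfl⟩ := Nat.exists_eq_add_of_le (Nat.lt_succ_iff.mp (mem_range.mp hk))
  rw [eval_mul, eval_C, eval_comp, eval_add, eval_X, eval_C,
    show 1 / 2 - ((k + j : ℕ) : ℝ) + (k + j : ℕ) = 1 / 2 by ring, ascPochhammer_eval_half,
    Nat.add_sub_cancel_left, show 2 * (k + j) - 2 * k = 2 * j by omega,
    Nat.cast_choose ℝ (Nat.le_add_right k j), Nat.add_sub_cancel_left, one_pow, mul_one, pow_mul,
    mul_pow, pow_add]
  field_simp
  rw [mul_pow, ← div_div, show (2 : ℝ) ^ 2 = 4 by norm_num, mul_div_cancel_right₀ _ (by positivity)]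
  ring

theorem neg_one_pow_mul_reducedGegenbauer_two_mul_eval_pos (hx0 : x ≠ 0) (hx1 : x ^ 2 < 1)
    (m : ℕ) : 0 < (-1) ^ m * (reducedGegenbauer x (2 * m)).eval (1 / 2 - m : ℝ) := by
  have hinv : 1 < (x ^ 2)⁻¹ := (one_lt_inv₀ (by positivity)).2 hx1
  rw [reducedGegenbauer_two_mul_eval, mul_left_comm, ← mul_pow,
    show -1 * (1 - (x ^ 2)⁻¹) = (x ^ 2)⁻¹ - 1 by ring]
  exact mul_pos (by positivity) (pow_pos (by linarith) _)

theorem reducedGegenbauer_of_sq_eq_one (hx : x ^ 2 = 1) (n : ℕ) :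
    reducedGegenbauer x n = (ascPochhammer ℝ (n / 2)).comp (X + C (1 / 2)) := by
  have hx0 : x ≠ 0 := by rintro rfl; norm_num at hx
  suffices h : ∀ m, reducedGegenbauer x (2 * m) = (ascPochhammer ℝ m).comp (X + C (1 / 2)) ∧
      reducedGegenbauer x (2 * m + 1) = (ascPochhammer ℝ m).comp (X + C (1 / 2)) by
    rcases Nat.even_or_odd' n with ⟨m, rfl | rfl⟩
    · rw [(h m).1, Nat.mul_div_cancel_left m two_pos]
    · rw [(h m).2, show (2 * m + 1) / 2 = m by omega]
  intro m
  induction m with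
  | zero => simp [reducedGegenbauer]
  | succ m ih =>
    have heven : reducedGegenbauer x (2 * m + 2) =
        (ascPochhammer ℝ (m + 1)).comp (X + C (1 / 2)) := by
      rw [reducedGegenbauer_two_mul_add_two hx0, ih.1, ih.2, hx,
        ascPochhammer_comp_X_add_half_succ]
      have e : C (2 * (m : ℝ) + 1) - C ((2 * m + 1) / (2 * 1) : ℝ) = C ((2 * m + 1) / 2 : ℝ) := by
        rw [← map_sub]
        congr 1
        ring
      linear_combination (ascPochhammer ℝ m).comp (X + C (1 / 2)) * e
    refine ⟨heven, mul_left_cancel₀ (X_add_C_ne_zero ((m : ℝ) + 1)) ?_⟩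
    rw [show 2 * (m + 1) + 1 = 2 * m + 3 by ring,
      X_add_C_mul_reducedGegenbauer_two_mul_add_three hx0, heven, ih.2, hx,
      ascPochhammer_comp_X_add_half_succ]
    have e : C (2 * (m : ℝ) + 2) - C ((m + 1) / 1 : ℝ) = C ((m : ℝ) + 1) := by
      rw [← map_sub]
      congr 1
      ring
    linear_combination
      (ascPochhammer ℝ m).comp (X + C (1 / 2)) * (X + C ((2 * m + 1) / 2 : ℝ)) * e

end Reduced

section RealRoots

variable {R : Type*} [CommRing R] [LinearOrder R] [IsStrictOrderedRing R]

theorem neg_one_pow_mul_eval_prod_X_sub_C_pos {β : ℕ → R} {c : R} {M i : ℕ} (hi : i ≤ M)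
    (hlt : ∀ j < i, β j < c) (hgt : ∀ j, i ≤ j → j < M → c < β j) :
    0 < (-1) ^ (M - i) * (∏ j ∈ range M, (X - C (β j))).eval c := by
  obtain ⟨l, rfl⟩ := Nat.exists_eq_add_of_le hi
  have hneg : ∏ k ∈ range l, (c - β (i + k)) = (-1) ^ l * ∏ k ∈ range l, (β (i + k) - c) := by
    rw [show (-1 : R) ^ l = (-1) ^ #(range l) by rw [card_range], ← prod_neg]
    simp only [neg_sub]
  rw [eval_prod, prod_range_add, Nat.add_sub_cancel_left]
  simp only [eval_sub, eval_X, eval_C]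
  rw [hneg, mul_left_comm, ← mul_assoc ((-1) ^ l), ← mul_pow, neg_one_mul, neg_neg, one_pow,
    one_mul]
  exact mul_pos (prod_pos fun j hj => sub_pos.2 (hlt j (mem_range.1 hj)))
    (prod_pos fun k hk => sub_pos.2 (hgt _ (by omega) (by grind)))

theorem neg_one_pow_succ_mul_pos {L K v w : R} {k : ℕ} (hL : 0 < L) (hK : 0 < K)
    (h : L * v = -(K * w)) (hw : 0 < (-1) ^ k * w) : 0 < (-1) ^ (k + 1) * v := by
  refine pos_of_mul_pos_right (a := L) ?_ hL.le
  rw [pow_succ, mul_left_comm, mul_assoc, h, mul_neg, neg_one_mul, neg_neg, mul_left_comm]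
  exact mul_pos hK hw

end RealRoots

theorem Polynomial.Monic.eq_prod_X_sub_C_of_isRoot {R : Type*} [CommRing R] [IsDomain R]
    {p : R[X]} {N : ℕ} (hm : p.Monic) (hdeg : p.natDegree = N) {ρ : ℕ → R}
    (hinj : Set.InjOn ρ (range N)) (hroot : ∀ i < N, p.IsRoot (ρ i)) :
    p = ∏ i ∈ range N, (X - C (ρ i)) := by
  set q := ∏ i ∈ range N, (X - C (ρ i))
  have hq : q.Monic := monic_prod_of_monic _ _ fun i _ => monic_X_sub_C _
  have hqdeg : q.natDegree = N := by
    rw [natDegree_prod_of_monic _ _ fun i _ => monic_X_sub_C _]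
    simp
  refine eq_of_degree_sub_lt_of_eval_index_eq _ hinj ?_ fun i hi => ?_
  · have := degree_sub_lt_left (q := q)
      (by rw [degree_eq_natDegree hm.ne_zero, degree_eq_natDegree hq.ne_zero, hdeg, hqdeg])
      hm.ne_zero (by rw [hm.leadingCoeff, hq.leadingCoeff])
    rwa [degree_eq_natDegree hm.ne_zero, hdeg, ← card_range N] at this
  · rw [(hroot i (mem_range.1 hi)).eq_zero, eval_prod, prod_eq_zero hi (by simp)]

theorem Polynomial.exists_isRoot_mem_Ioo {p : ℝ[X]} {a b : ℝ} (hab : a ≤ b)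
    (h : p.eval a * p.eval b < 0) : ∃ r ∈ Set.Ioo a b, p.IsRoot r := by
  have hcont : ContinuousOn (fun y => p.eval y) (Set.Icc a b) := p.continuousOn
  rcases mul_neg_iff.1 h with ⟨ha, hb⟩ | ⟨ha, hb⟩
  · exact intermediate_value_Ioo' hab hcont ⟨hb, ha⟩
  · exact intermediate_value_Ioo hab hcont ⟨ha, hb⟩

theorem Polynomial.Monic.exists_isRoot_gt {p : ℝ[X]} (hm : p.Monic) (hdeg : 0 < p.natDegree)
    {a : ℝ} (ha : p.eval a < 0) : ∃ r, a < r ∧ p.IsRoot r := by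
  have hlim := p.tendsto_atTop_of_leadingCoeff_nonneg (natDegree_pos_iff_degree_pos.1 hdeg)
    (by rw [hm.leadingCoeff]; exact zero_le_one)
  obtain ⟨b, hab, hb⟩ := ((hlim.eventually_gt_atTop 0).and (Filter.eventually_ge_atTop a)).exists
  obtain ⟨r, hr, hroot⟩ := exists_isRoot_mem_Ioo hb (mul_neg_of_neg_of_pos ha hab)
  exact ⟨r, hr.1, hroot⟩

theorem Polynomial.Monic.exists_eq_prod_X_sub_C_of_sign_alternation {p : ℝ[X]} {N : ℕ}
    (hm : p.Monic) (hdeg : p.natDegree = N) {t : ℕ → ℝ} (ht : ∀ i j, i < j → j < N → t i < t j)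
    (hsign : ∀ i < N, 0 < (-1) ^ (N - i) * p.eval (t i)) :
    ∃ ρ : ℕ → ℝ, p = ∏ i ∈ range N, (X - C (ρ i)) ∧ (∀ i < N, t i < ρ i) ∧
      ∀ i j, i < j → j < N → ρ i < t j := by
  have hroot : ∀ i < N, ∃ r, t i < r ∧ (i + 1 < N → r < t (i + 1)) ∧ p.IsRoot r := by
    intro i hi
    have h1 := hsign i hi
    by_cases hi1 : i + 1 < N
    · have h2 := hsign (i + 1) hi1
      rw [show N - i = N - (i + 1) + 1 by omega, pow_succ] at h1
      have hs : ((-1 : ℝ) ^ (N - (i + 1))) * (-1) ^ (N - (i + 1)) = 1 := by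
        rw [← mul_pow, neg_one_mul, neg_neg, one_pow]
      obtain ⟨r, hr, hroot⟩ := exists_isRoot_mem_Ioo (ht i (i + 1) (by omega) hi1).le
        (by nlinarith [mul_pos h1 h2, hs])
      exact ⟨r, hr.1, fun _ => hr.2, hroot⟩
    · rw [show N - i = 1 by omega, pow_one, neg_one_mul, neg_pos] at h1
      obtain ⟨r, hr, hroot⟩ := hm.exists_isRoot_gt (by omega) h1
      exact ⟨r, hr, fun h => absurd h hi1, hroot⟩
  choose! ρ hρ using hroot
  have hρt : ∀ i j, i < j → j < N → ρ i < t j := fun i j hij hj =>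
    ((hρ i (by omega)).2.1 (by omega)).trans_le <|
      (eq_or_lt_of_le (show i + 1 ≤ j by omega)).elim (fun h => h ▸ le_rfl)
        fun h => (ht _ _ h hj).le
  have hmono : StrictMonoOn ρ (range N) := fun i hi j hj hij =>
    (hρt i j hij (by simpa using hj)).trans (hρ j (by simpa using hj)).1
  exact ⟨ρ, hm.eq_prod_X_sub_C_of_isRoot hdeg hmono.injOn fun i hi => (hρ i hi).2.2,
    fun i hi => (hρ i hi).1, hρt⟩

section Interlacing

variable {x : ℝ}

theorem reducedGegenbauer_two_mul_add_two_eval_of_isRoot (hx : x ≠ 0) {m : ℕ} {z : ℝ}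
    (hz : (reducedGegenbauer x (2 * m + 1)).IsRoot z) :
    (reducedGegenbauer x (2 * m + 2)).eval z =
      -((2 * m + 1) / (2 * x ^ 2) * (reducedGegenbauer x (2 * m)).eval z) := by
  rw [reducedGegenbauer_two_mul_add_two hx, eval_sub, eval_mul, eval_mul, eval_C, hz.eq_zero,
    mul_zero, zero_sub]

theorem reducedGegenbauer_two_mul_add_three_eval_of_isRoot (hx : x ≠ 0) {m : ℕ} {z : ℝ}
    (hz : (reducedGegenbauer x (2 * m + 2)).IsRoot z) :
    (z + (m + 1)) * (reducedGegenbauer x (2 * m + 3)).eval z =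
      -((m + 1) / x ^ 2 * (z + (2 * m + 1) / 2) * (reducedGegenbauer x (2 * m + 1)).eval z) := by
  have h := congrArg (eval z) (X_add_C_mul_reducedGegenbauer_two_mul_add_three hx m)
  simp only [eval_mul, eval_sub, eval_add, eval_X, eval_C, hz.eq_zero] at h
  linear_combination h

theorem reducedGegenbauer_two_mul_add_two_interlacing (hx0 : x ≠ 0) (hx1 : x ^ 2 < 1) {m : ℕ}
    {γ δ : ℕ → ℝ} (hγ : reducedGegenbauer x (2 * m) = ∏ i ∈ range m, (X - C (γ i)))
    (hδ : reducedGegenbauer x (2 * m + 1) = ∏ i ∈ range m, (X - C (δ i)))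
    (hγlow : ∀ i < m, 1 / 2 - m < γ i) (hγδ : ∀ i < m, γ i < δ i)
    (hδγ : ∀ i j, i < j → j < m → δ i < γ j) :
    ∃ ρ : ℕ → ℝ, reducedGegenbauer x (2 * m + 2) = ∏ i ∈ range (m + 1), (X - C (ρ i)) ∧
      (∀ i < m + 1, -1 / 2 - m < ρ i) ∧ (∀ i j, i ≤ j → j < m → ρ i < δ j) ∧
      ∀ i j, i < j → j < m + 1 → δ i < ρ j := by
  have hδmono : ∀ i j, i < j → j < m → δ i < δ j := fun i j hij hj =>
    (hδγ i j hij hj).trans (hγδ j hj)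
  -- the roots of `R_{2m+1}`, preceded by `1/2 - (m+1)`, where the sign is known explicitly
  set t : ℕ → ℝ := fun | 0 => -1 / 2 - m | i + 1 => δ i
  have htmono : ∀ i j, i < j → j < m + 1 → t i < t j := by
    rintro (_ | i) (_ | j) hij hj
    · omega
    · show -1 / 2 - m < δ j
      linarith [hγlow j (by omega), hγδ j (by omega)]
    · omega
    · exact hδmono i j (by omega) (by omega)
  have hsign : ∀ i < m + 1,
      0 < (-1) ^ (m + 1 - i) * (reducedGegenbauer x (2 * m + 2)).eval (t i) := by
    rintro (_ | i) hi
    · have h := neg_one_pow_mul_reducedGegenbauer_two_mul_eval_pos hx0 hx1 (m + 1)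
      rwa [show 2 * (m + 1) = 2 * m + 2 by ring, Nat.cast_succ,
        show 1 / 2 - ((m : ℝ) + 1) = -1 / 2 - m by ring] at h
    · show 0 < (-1) ^ (m + 1 - (i + 1)) * (reducedGegenbauer x (2 * m + 2)).eval (δ i)
      have hroot : (reducedGegenbauer x (2 * m + 1)).IsRoot (δ i) := by
        rw [hδ, IsRoot, eval_prod, prod_eq_zero (mem_range.2 (by omega : i < m)) (by simp)]
      rw [show m + 1 - (i + 1) = m - (i + 1) + 1 by omega]
      refine neg_one_pow_succ_mul_pos one_pos (K := (2 * m + 1) / (2 * x ^ 2)) (by positivity)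
        (by rw [one_mul]; exact reducedGegenbauer_two_mul_add_two_eval_of_isRoot hx0 hroot) ?_
      rw [hγ]
      refine neg_one_pow_mul_eval_prod_X_sub_C_pos (by omega) (fun j hj => ?_)
        fun j hj1 hj2 => hδγ i j (by omega) hj2
      rcases Nat.lt_succ_iff_lt_or_eq.1 hj with hj | rfl
      · exact (hγδ j (by omega)).trans (hδmono j i hj (by omega))
      · exact hγδ j (by omega)
  obtain ⟨ρ, hρ, htρ, hρt⟩ :=
    (reducedGegenbauer_monic x _).exists_eq_prod_X_sub_C_of_sign_alternation
      (by rw [natDegree_reducedGegenbauer]; omega) htmono hsign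
  have htle : ∀ i j, i ≤ j → j < m + 1 → t i ≤ t j := fun i j hij hj =>
    (eq_or_lt_of_le hij).elim (fun h => h ▸ le_rfl) fun h => (htmono i j h hj).le
  exact ⟨ρ, hρ, fun i hi => (htle 0 i (Nat.zero_le i) hi).trans_lt (htρ i hi),
    fun i j hij hj => hρt i (j + 1) (by omega) (by omega),
    fun i j hij hj => (htle (i + 1) j hij hj).trans_lt (htρ j hj)⟩

theorem reducedGegenbauer_two_mul_add_three_interlacing (hx0 : x ≠ 0) {m : ℕ} {δ ρ : ℕ → ℝ}
    (hδ : reducedGegenbauer x (2 * m + 1) = ∏ i ∈ range m, (X - C (δ i)))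
    (hρ : reducedGegenbauer x (2 * m + 2) = ∏ i ∈ range (m + 1), (X - C (ρ i)))
    (hρlow : ∀ i < m + 1, -1 / 2 - m < ρ i) (hρδ : ∀ i j, i ≤ j → j < m → ρ i < δ j)
    (hδρ : ∀ i j, i < j → j < m + 1 → δ i < ρ j) :
    ∃ δ' : ℕ → ℝ, reducedGegenbauer x (2 * m + 3) = ∏ i ∈ range (m + 1), (X - C (δ' i)) ∧
      (∀ i < m + 1, ρ i < δ' i) ∧ ∀ i j, i < j → j < m + 1 → δ' i < ρ j := by
  have hρmono : ∀ i j, i < j → j < m + 1 → ρ i < ρ j := fun i j hij hj =>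
    (hρδ i i le_rfl (by omega)).trans (hδρ i j hij hj)
  have hsign : ∀ i < m + 1,
      0 < (-1) ^ (m + 1 - i) * (reducedGegenbauer x (2 * m + 3)).eval (ρ i) := by
    intro i hi
    have hroot : (reducedGegenbauer x (2 * m + 2)).IsRoot (ρ i) := by
      rw [hρ, IsRoot, eval_prod, prod_eq_zero (mem_range.2 hi) (by simp)]
    have hlow := hρlow i hi
    rw [show m + 1 - i = m - i + 1 by omega]
    refine neg_one_pow_succ_mul_pos (by linarith) (mul_pos (by positivity) (by linarith))
      (reducedGegenbauer_two_mul_add_three_eval_of_isRoot hx0 hroot) ?_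
    rw [hδ]
    exact neg_one_pow_mul_eval_prod_X_sub_C_pos (by omega) (fun j hj => hδρ j i hj hi)
      fun j hj1 hj2 => hρδ i j hj1 hj2
  exact (reducedGegenbauer_monic x _).exists_eq_prod_X_sub_C_of_sign_alternation
    (by rw [natDegree_reducedGegenbauer]; omega) hρmono hsign

theorem reducedGegenbauer_interlacing (hx0 : x ≠ 0) (hx1 : x ^ 2 < 1) (m : ℕ) :
    ∃ γ δ : ℕ → ℝ, reducedGegenbauer x (2 * m) = ∏ i ∈ range m, (X - C (γ i)) ∧
      reducedGegenbauer x (2 * m + 1) = ∏ i ∈ range m, (X - C (δ i)) ∧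
      (∀ i < m, 1 / 2 - m < γ i) ∧ (∀ i < m, γ i < δ i) ∧
      ∀ i j, i < j → j < m → δ i < γ j := by
  induction m with
  | zero =>
    exact ⟨0, 0, by simp [reducedGegenbauer], by simp [reducedGegenbauer], by simp, by simp,
      by simp⟩
  | succ m ih =>
    obtain ⟨γ, δ, hγ, hδ, hγlow, hγδ, hδγ⟩ := ih
    obtain ⟨ρ, hρ, hρlow, hρδ, hδρ⟩ :=
      reducedGegenbauer_two_mul_add_two_interlacing hx0 hx1 hγ hδ hγlow hγδ hδγ
    obtain ⟨δ', hδ', hρδ', hδ'ρ⟩ :=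
      reducedGegenbauer_two_mul_add_three_interlacing hx0 hδ hρ hρlow hρδ hδρ
    refine ⟨ρ, δ', hρ, hδ', fun i hi => ?_, hρδ', hδ'ρ⟩
    push_cast
    linarith [hρlow i hi]

end Interlacing

theorem splits_reducedGegenbauer {x : ℝ} (hx0 : x ≠ 0) (hx1 : x ^ 2 ≤ 1) (n : ℕ) :
    (reducedGegenbauer x n).Splits := by
  rcases hx1.lt_or_eq with hx1 | hx1
  · obtain ⟨γ, δ, hγ, hδ, -⟩ := reducedGegenbauer_interlacing hx0 hx1 (n / 2)
    rcases Nat.even_or_odd' n with ⟨m, rfl | rfl⟩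
    · rw [show 2 * m / 2 = m by omega] at hγ
      rw [hγ]
      exact Splits.prod fun i _ => Splits.X_sub_C _
    · rw [show (2 * m + 1) / 2 = m by omega] at hδ
      rw [hδ]
      exact Splits.prod fun i _ => Splits.X_sub_C _
  · rw [reducedGegenbauer_of_sq_eq_one hx1]
    exact (splits_ascPochhammer _).comp_X_add_C _

theorem natDegree_gegenbauerZ {x : ℝ} (hx : x ≠ 0) (n : ℕ) : (gegenbauerZ n x).natDegree = n := by
  rw [gegenbauerZ_eq_C_mul_ascPochhammer_mul hx, natDegree_C_mul (by positivity),
    (monic_ascPochhammer ℝ _).natDegree_mul (reducedGegenbauer_monic x n),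
    ascPochhammer_natDegree, natDegree_reducedGegenbauer]
  omega

theorem splits_gegenbauerZ {x : ℝ} (hx0 : x ≠ 0) (hx1 : x ^ 2 ≤ 1) (n : ℕ) :
    (gegenbauerZ n x).Splits := by
  rw [gegenbauerZ_eq_C_mul_ascPochhammer_mul hx0]
  exact ((splits_ascPochhammer _).mul (splits_reducedGegenbauer hx0 hx1 n)).C_mul _

/-- For every `x₀ ∈ [-1,1]`, `x₀ ≠ 0`, the polynomial `G_n(x₀, ·)` in the parameter `z`
has degree `n` and all of its roots are real. -/
theorem gegenbauerZ_real_rooted (n : ℕ) (x₀ : ℝ)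
    (hx₁ : x₀ ∈ Set.Icc (-1 : ℝ) 1) (hx₀ : x₀ ≠ 0) :
    (gegenbauerZ n x₀).natDegree = n ∧
    (gegenbauerZ n x₀).roots.card = n := by
  have hdeg := natDegree_gegenbauerZ hx₀ n
  have hsq : x₀ ^ 2 ≤ 1 := by nlinarith [hx₁.1, hx₁.2]
  exact ⟨hdeg, (splits_gegenbauerZ hx₀ hsq n).natDegree_eq_card_roots.symm.trans hdeg⟩
end

section
/- At x = −1, the Gegenbauer polynomial in the parameter z satisfies G_n(−1, z) = (−1)^n (2^n/n!) Π_{i=0}^{n−1}(z + i/2); in particular it is real-rooted in z with n simple roots located at z = −i/2 for i = 0,…,n−1. -/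
/-!
Write `(z)_m` for the rising factorial. At `x = 1` the defining sum is
`∑_k (-1)^k 2^(n-2k) (z)_(n-k) / (k! (n-2k)!)`, and it equals
`(2z)_n / n! = (2^n / n!) ∏_{i<n} (z + i/2)`: both sides are `1` at `n = 0` and satisfy
`(n + 1) F_{n+1} = (2z + n) F_n`. For the sum this follows from the coefficient recurrence
`(n + 1) c_{n+1,k+1} = 2 c_{n,k+1} - (n - 2k) c_{n,k}` combined with
`(2z + n) (z)_m = 2 (z)_{m+1} + (n - 2m) (z)_m`. Since `(2x)^(n-2k)` has the parity of `n` in `x`,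
`G_n(-x, z) = (-1)^n G_n(x, z)`, and the roots are read off the product.
-/

open Polynomial Finset

open scoped Nat

theorem ascPochhammer_eq_prod_range (R : Type*) [CommSemiring R] (n : ℕ) :
    ascPochhammer R n = ∏ i ∈ range n, (X + C (i : R)) := by
  induction n with
  | zero => simp
  | succ n ih => rw [ascPochhammer_succ_right, ih, prod_range_succ, map_natCast]

theorem gegenbauerZ_neg (n : ℕ) (x : ℝ) :
    gegenbauerZ n (-x) = C ((-1) ^ n) * gegenbauerZ n x := by
  rw [gegenbauerZ, gegenbauerZ, mul_sum]
  refine sum_congr rfl fun k hk => ?_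
  obtain ⟨j, rfl⟩ : ∃ j, n = 2 * k + j := ⟨n - 2 * k, by have := mem_range.1 hk; omega⟩
  rw [← mul_assoc, ← C_mul, Nat.add_sub_cancel_left, pow_add, pow_mul, neg_one_sq, one_pow,
    one_mul, mul_neg, neg_eq_neg_one_mul (2 * x), mul_pow]
  ring_nf

/-- The coefficient of `(z)_(n-k)` in `G_n(1, z)`. -/
noncomputable def gegenbauerOneCoeff (n k : ℕ) : ℝ :=
  if 2 * k ≤ n then (-1) ^ k * 2 ^ (n - 2 * k) / (k ! * (n - 2 * k)!) else 0

theorem eval_gegenbauerZ_one_eq_sum (n N : ℕ) (hN : n / 2 < N) (z : ℝ) :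
    (gegenbauerZ n 1).eval z =
      ∑ k ∈ range N, gegenbauerOneCoeff n k * (ascPochhammer ℝ (n - k)).eval z := by
  refine (sum_subset (range_subset_range.2 hN) fun k _ hk => ?_).symm.trans ?_ |>.symm
  · rw [gegenbauerOneCoeff, if_neg (by simp at hk; omega), zero_mul]
  simp only [gegenbauerZ, eval_finsetSum, eval_mul, eval_C, ascPochhammer_eq_prod_range]
  refine sum_congr rfl fun k hk => ?_
  rw [gegenbauerOneCoeff, if_pos (by simp at hk; omega), mul_one]

theorem gegenbauerOneCoeff_succ_zero (n : ℕ) :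
    (n + 1) * gegenbauerOneCoeff (n + 1) 0 = 2 * gegenbauerOneCoeff n 0 := by
  simp only [gegenbauerOneCoeff, Nat.zero_le, if_true, mul_zero, Nat.sub_zero, pow_zero,
    Nat.factorial_zero, Nat.cast_one, one_mul, Nat.factorial_succ, Nat.cast_mul, pow_succ]
  field_simp
  push_cast
  ring

theorem gegenbauerOneCoeff_succ_succ (n k : ℕ) :
    (n + 1) * gegenbauerOneCoeff (n + 1) (k + 1) =
      2 * gegenbauerOneCoeff n (k + 1) - (n - 2 * k) * gegenbauerOneCoeff n k := by
  rcases le_or_gt n (2 * k) with h | h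
  · have hk : ((n : ℝ) - 2 * k) * gegenbauerOneCoeff n k = 0 := by
      rcases h.eq_or_lt with rfl | h
      · push_cast; ring
      · rw [gegenbauerOneCoeff, if_neg (by omega), mul_zero]
    rw [hk, gegenbauerOneCoeff, gegenbauerOneCoeff, if_neg (by omega), if_neg (by omega)]
    ring
  obtain ⟨m, rfl⟩ : ∃ m, n = 2 * k + 1 + m := ⟨n - (2 * k + 1), by omega⟩
  simp only [gegenbauerOneCoeff]
  rw [if_pos (show 2 * (k + 1) ≤ 2 * k + 1 + m + 1 by omega),
    if_pos (show 2 * k ≤ 2 * k + 1 + m by omega),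
    show 2 * k + 1 + m + 1 - 2 * (k + 1) = m by omega,
    show 2 * k + 1 + m - 2 * k = m + 1 by omega]
  rcases m with _ | m
  · rw [if_neg (by omega)]
    simp only [Nat.factorial_succ, Nat.cast_mul]
    field_simp
    push_cast
    ring
  · rw [if_pos (by omega), show 2 * k + 1 + (m + 1) - 2 * (k + 1) = m by omega]
    simp only [Nat.factorial_succ, Nat.cast_mul, pow_succ]
    field_simp
    push_cast
    ring

theorem eval_gegenbauerZ_one_succ (n : ℕ) (z : ℝ) :
    (n + 1) * (gegenbauerZ (n + 1) 1).eval z = (2 * z + n) * (gegenbauerZ n 1).eval z := by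
  set P : ℕ → ℝ := fun m => (ascPochhammer ℝ m).eval z
  have hP (m : ℕ) : (2 * z + n) * P m = 2 * P (m + 1) + (n - 2 * m) * P m := by
    simp only [P, ascPochhammer_succ_eval]
    ring
  calc (n + 1) * (gegenbauerZ (n + 1) 1).eval z
      = ∑ k ∈ range (n + 2), (n + 1) * gegenbauerOneCoeff (n + 1) k * P (n + 1 - k) := by
        rw [eval_gegenbauerZ_one_eq_sum (n + 1) (n + 2) (by omega), mul_sum]
        simp only [P, mul_assoc]
    _ = 2 * gegenbauerOneCoeff n 0 * P (n + 1) + ∑ k ∈ range (n + 1),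
          (2 * gegenbauerOneCoeff n (k + 1) - (n - 2 * k) * gegenbauerOneCoeff n k) *
            P (n - k) := by
        rw [sum_range_succ', add_comm]
        simp only [gegenbauerOneCoeff_succ_zero, gegenbauerOneCoeff_succ_succ,
          Nat.add_sub_add_right, Nat.sub_zero]
    _ = ∑ k ∈ range (n + 1), (2 * gegenbauerOneCoeff n k * P (n - k + 1) -
          (n - 2 * k) * gegenbauerOneCoeff n k * P (n - k)) := by
        have hvanish : gegenbauerOneCoeff n (n + 1) = 0 := if_neg (by omega)
        have hshift : ∑ k ∈ range (n + 1), 2 * gegenbauerOneCoeff n k * P (n - k + 1) =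
            2 * gegenbauerOneCoeff n 0 * P (n + 1) +
              ∑ k ∈ range (n + 1), 2 * gegenbauerOneCoeff n (k + 1) * P (n - k) := by
          rw [sum_range_succ', sum_range_succ _ n, hvanish, mul_zero, zero_mul, add_zero, add_comm]
          refine congrArg _ (sum_congr rfl fun k hk => ?_)
          rw [show n - (k + 1) + 1 = n - k by simp at hk; omega]
        rw [sum_sub_distrib, hshift]
        simp only [sub_mul, sum_sub_distrib]
        ring
    _ = (2 * z + n) * (gegenbauerZ n 1).eval z := by
        rw [eval_gegenbauerZ_one_eq_sum n (n + 1) (by omega), mul_sum]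
        refine sum_congr rfl fun k hk => ?_
        rw [mul_left_comm, hP, Nat.cast_sub (by simp at hk; omega)]
        ring

theorem gegenbauerZ_one (n : ℕ) :
    gegenbauerZ n 1 = C ((2 : ℝ) ^ n / n !) * ∏ i ∈ range n, (X + C ((i : ℝ) / 2)) := by
  refine Polynomial.funext fun z => ?_
  induction n with
  | zero => simp [gegenbauerZ]
  | succ n ih =>
    refine mul_left_cancel₀ (Nat.cast_add_one_ne_zero n) ?_
    rw [eval_gegenbauerZ_one_succ, ih]
    simp only [eval_mul, eval_C, eval_prod, eval_add, eval_X, prod_range_succ, Nat.factorial_succ,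
      Nat.cast_mul, pow_succ]
    field_simp
    push_cast
    ring

theorem roots_C_mul_prod_range_X_add_C {R : Type*} [CommRing R] [IsDomain R] {c : R}
    (hc : c ≠ 0) (n : ℕ) (f : ℕ → R) :
    (C c * ∏ i ∈ range n, (X + C (f i))).roots = (Multiset.range n).map (fun i => -f i) := by
  rw [roots_C_mul _ hc, ← roots_multiset_prod_X_sub_C ((Multiset.range n).map fun i => -f i),
    Multiset.map_map, prod_eq_multiset_prod, range_val]
  simp [sub_neg_eq_add]

/-- At `x = -1`: `G_n(-1, z) = (-1)^n (2^n/n!) ∏_{i=0}^{n-1}(z + i/2)`, so it is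
real-rooted in `z` with `n` simple roots at `z = -i/2`, `i = 0, …, n-1`. -/
theorem gegenbauerZ_at_neg_one (n : ℕ) :
    gegenbauerZ n (-1) =
      Polynomial.C ((-1 : ℝ) ^ n * 2 ^ n / (n.factorial : ℝ)) *
        ∏ i ∈ Finset.range n, (Polynomial.X + Polynomial.C ((i : ℝ) / 2)) ∧
    (gegenbauerZ n (-1)).roots = (Multiset.range n).map (fun i => -((i : ℝ) / 2)) := by
  have hG : gegenbauerZ n (-1) =
      C ((-1 : ℝ) ^ n * 2 ^ n / n !) * ∏ i ∈ range n, (X + C ((i : ℝ) / 2)) := by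
    rw [gegenbauerZ_neg, gegenbauerZ_one, ← mul_assoc, ← C_mul, mul_div_assoc]
  refine ⟨hG, ?_⟩
  rw [hG, roots_C_mul_prod_range_X_add_C (by positivity) n fun i => (i : ℝ) / 2]
  -- the statement's right-hand side reaches `Multiset ℝ` through the monadic coercion
  -- of `Multiset.range n`
  simp [Multiset.map_map]
end

section
/- For the generalized Laguerre polynomial L_n(x,z) and any k ≤ n, the k-th partial derivative with respect to the parameter, ∂_z^k L_n(x,z), is a polynomial of degree exactly n − k in x; and ∂_z^k L_n(x,z) = 0 identically when k > n. -/
open Polynomial Finset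

/-- The generalized Laguerre polynomial as a bivariate polynomial: the outer variable is
the parameter z, the inner coefficients are polynomials in x. -/
noncomputable def laguerreBiv (n : Nat) : Polynomial (Polynomial Real) :=
  Finset.sum (Finset.range (n + 1)) fun k =>
    Polynomial.C (Polynomial.C ((-1 : Real) ^ k / ((k.factorial : Real) * ((n - k).factorial : Real))) *
        Polynomial.X ^ k) *
      Finset.prod (Finset.Icc (k + 1) n) fun j =>
        (Polynomial.X + Polynomial.C (Polynomial.C (j : Real)))

/-- The k-th derivative in the parameter z of the Laguerre polynomial, specialized at a
real value z, as a polynomial in x. -/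
noncomputable def laguerreDz (n k : Nat) (z : Real) : Polynomial Real :=
  (Polynomial.derivative^[k] (laguerreBiv n)).eval (Polynomial.C z)

/-!
The coefficient of `x ^ i` in `L_n(x, z)` is `c i * (z + i + 1) ⋯ (z + n)` with a nonzero constant
`c i`, a polynomial in `z` of degree `n - i` and leading coefficient `c i`. Hence `∂_z^k` kills the
coefficients of `x ^ i` for `i > n - k` and turns that of `x ^ (n - k)` into the constant
`c (n - k) * k!`; and `L_n` has degree `n` in `z`.
-/

open scoped Nat

namespace Polynomial

theorem iterate_derivative_natDegree_of_monic {R : Type*} [Semiring R] {p : R[X]}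
    (hp : p.Monic) : derivative^[p.natDegree] p = C (p.natDegree ! : R) := by
  have hdeg : (derivative^[p.natDegree] p).natDegree ≤ 0 :=
    (natDegree_iterate_derivative _ _).trans (Nat.sub_self _).le
  rw [eq_C_of_natDegree_le_zero hdeg, coeff_iterate_derivative, zero_add, ← leadingCoeff,
    hp.leadingCoeff, Nat.descFactorial_self, nsmul_one]

end Polynomial

section LaguerreFactor

variable (R : Type*) [CommSemiring R]

/-- `(z + i + 1) ⋯ (z + n)`, the `z`-dependent part of the coefficient of `x ^ i` in `L_n`. -/
noncomputable def laguerreFactor (n i : ℕ) : R[X] :=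
  ∏ j ∈ Icc (i + 1) n, (X + C (j : R))

theorem laguerreFactor_monic (n i : ℕ) : (laguerreFactor R n i).Monic :=
  monic_prod_of_monic _ _ fun _ _ => monic_X_add_C _

theorem natDegree_laguerreFactor [Nontrivial R] (n i : ℕ) :
    (laguerreFactor R n i).natDegree = n - i := by
  rw [laguerreFactor, natDegree_prod_of_monic _ _ fun _ _ => monic_X_add_C _]
  simp only [natDegree_X_add_C, sum_const, smul_eq_mul, mul_one, Nat.card_Icc]
  omega

variable {R}

theorem map_laguerreFactor {S : Type*} [CommSemiring S] (f : R →+* S) (n i : ℕ) :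
    (laguerreFactor R n i).map f = laguerreFactor S n i := by
  simp [laguerreFactor, Polynomial.map_prod]

end LaguerreFactor

noncomputable def laguerreCoeff (n i : ℕ) : ℝ :=
  (-1) ^ i / (i ! * (n - i)!)

theorem laguerreCoeff_ne_zero (n i : ℕ) : laguerreCoeff n i ≠ 0 := by
  unfold laguerreCoeff
  have := i.factorial_ne_zero
  have := (n - i).factorial_ne_zero
  positivity

theorem laguerreBiv_eq_sum (n : ℕ) :
    laguerreBiv n = ∑ i ∈ range (n + 1),
      C (C (laguerreCoeff n i) * X ^ i) * laguerreFactor ℝ[X] n i := by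
  simp [laguerreBiv, laguerreCoeff, laguerreFactor]

theorem natDegree_laguerreBiv_le (n : ℕ) : (laguerreBiv n).natDegree ≤ n := by
  rw [laguerreBiv_eq_sum]
  refine natDegree_sum_le_of_forall_le _ _ fun i _ => natDegree_mul_le.trans ?_
  rw [natDegree_C, zero_add, natDegree_laguerreFactor]
  omega

theorem laguerreDz_eq_sum (n k : ℕ) (z : ℝ) :
    laguerreDz n k z = ∑ i ∈ range (n + 1),
      C (laguerreCoeff n i * (derivative^[k] (laguerreFactor ℝ n i)).eval z) * X ^ i := by
  rw [laguerreDz, laguerreBiv_eq_sum, iterate_derivative_sum, eval_finsetSum]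
  refine sum_congr rfl fun i _ => ?_
  rw [iterate_derivative_C_mul, ← map_laguerreFactor C, iterate_derivative_map, eval_mul,
    eval_C, eval_map_apply, C_mul]
  ring

theorem coeff_laguerreDz (n k m : ℕ) (z : ℝ) :
    (laguerreDz n k z).coeff m =
      if m ≤ n then laguerreCoeff n m * (derivative^[k] (laguerreFactor ℝ n m)).eval z
      else 0 := by
  simp only [laguerreDz_eq_sum, finsetSum_coeff, coeff_C_mul_X_pow]
  rw [sum_ite_eq (range (n + 1)) m]
  simp only [mem_range, Nat.lt_succ_iff]

theorem coeff_laguerreDz_sub (n k : ℕ) (hk : k ≤ n) (z : ℝ) :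
    (laguerreDz n k z).coeff (n - k) = laguerreCoeff n (n - k) * k ! := by
  have hdeg : (laguerreFactor ℝ n (n - k)).natDegree = k := by
    rw [natDegree_laguerreFactor]; omega
  have hderiv := iterate_derivative_natDegree_of_monic (laguerreFactor_monic ℝ n (n - k))
  rw [hdeg] at hderiv
  rw [coeff_laguerreDz, if_pos (Nat.sub_le n k), hderiv, eval_C]

theorem coeff_laguerreDz_eq_zero_of_lt (n k m : ℕ) (z : ℝ) (hm : n - k < m) :
    (laguerreDz n k z).coeff m = 0 := by
  rw [coeff_laguerreDz]
  split_ifs with h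
  · rw [iterate_derivative_eq_zero (by rw [natDegree_laguerreFactor]; omega), eval_zero,
      mul_zero]
  · rfl

/-- For k <= n, the k-th z-derivative of L_n is of degree exactly n - k in x (for every
value of the parameter z), and it vanishes identically for k > n. -/
theorem laguerreDz_degree (n k : Nat) :
    (k ≤ n → ∀ z : Real, laguerreDz n k z ≠ 0 ∧ (laguerreDz n k z).natDegree = n - k) ∧
    (n < k → Polynomial.derivative^[k] (laguerreBiv n) = 0) := by
  refine ⟨fun hk z => ?_,
    fun hk => iterate_derivative_eq_zero ((natDegree_laguerreBiv_le n).trans_lt hk)⟩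
  have hlead : (laguerreDz n k z).coeff (n - k) ≠ 0 := by
    rw [coeff_laguerreDz_sub n k hk]
    exact mul_ne_zero (laguerreCoeff_ne_zero n _) (Nat.cast_ne_zero.mpr k.factorial_ne_zero)
  refine ⟨fun h => hlead (by rw [h, coeff_zero]), natDegree_eq_of_le_of_coeff_ne_zero ?_ hlead⟩
  exact natDegree_le_iff_coeff_eq_zero.mpr fun m hm => coeff_laguerreDz_eq_zero_of_lt n k m z hm
end
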